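/- With the notation above, at a point x_k of positive absolute maximum of f_k = (f - f(x₀) + 1)·ψ^{-1/k}, for every tangent vector X one has Hess f(x_k)(X, X) ≤ ((f(x_k) - f(x₀) + 1)/(k ψ(x_k))) · (Hess ψ(x_k)(X, X) + ((1/k) - 1)·(dψ(X))²/ψ(x_k)), and in particular Hess f(x_k)(X, X) ≤ ((f(x_k) - f(x₀) + 1)/(k ψ(x_k))) · Hess ψ(x_k)(X, X) when dψ(X) ≠ 0 is allowed since (1/k - 1) ≤ 0. -/

import Mathlib

/-!
Write `a = 1/k` and let `c` be the maximum value of `f_k`. Maximality says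
`f - f x₀ + 1 ≤ c ψ^a` everywhere, with equality at `x_k`; so `f - c ψ^a` is maximal at `x_k`
and its Hessian there is negative semidefinite. Along each line the one-variable second
derivative test applies, and `Hess (ψ^a) = a ψ^(a-1) (Hess ψ + (a - 1) dψ ⊗ dψ / ψ)`, while
`c ψ(x_k)^a = f(x_k) - f(x₀) + 1`. The second inequality follows because `a ≤ 1` and
`c ≥ f_k(x₀) > 0`.
-/

open Real Set Filter Topology

theorem IsLocalMax.hasDerivAt_deriv_nonpos {f f' : ℝ → ℝ} {f'' x : ℝ} (hmax : IsLocalMax f x)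
    (hf : ∀ᶠ y in 𝓝 x, HasDerivAt f (f' y) y) (hf' : HasDerivAt f' f'' x) : f'' ≤ 0 := by
  -- if `f'' > 0`, then `f'` is positive just right of `x`, so `f` exceeds `f x` there (MVT)
  by_contra! hpos
  have hd : deriv f =ᶠ[𝓝 x] f' := hf.mono fun y hy => hy.deriv
  have hinc : ∀ᶠ y in 𝓝[>] x, 0 < deriv f y :=
    deriv_pos_right_of_sign_deriv <| nhdsWithin_le_nhds <|
      eventually_nhdsWithin_sign_eq_of_deriv_pos
        ((hf'.congr_of_eventuallyEq hd).deriv ▸ hpos) hmax.deriv_eq_zero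
  obtain ⟨ε, hε, hsub⟩ := mem_nhdsGT_iff_exists_Ioo_subset.1
    (hinc.and (nhdsWithin_le_nhds (hmax.and hf)))
  obtain ⟨b, hxb, hbε⟩ := exists_between (mem_Ioi.1 hε)
  have hmem : ∀ y, x < y → y ≤ b → y ∈ Ioo x ε := fun y h1 h2 => ⟨h1, h2.trans_lt hbε⟩
  have hcont : ContinuousOn f (Icc x b) := by
    rintro y ⟨hxy, hyb⟩
    rcases hxy.eq_or_lt with rfl | hxy
    · exact hf.self_of_nhds.continuousAt.continuousWithinAt
    · exact (hsub (hmem y hxy hyb)).2.2.continuousAt.continuousWithinAt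
  obtain ⟨ξ, hξ, hslope⟩ := exists_hasDerivAt_eq_slope f (deriv f) hxb hcont
    fun y hy => (hsub (hmem y hy.1 hy.2.le)).2.2.differentiableAt.hasDerivAt
  have hfb : f b ≤ f x := (hsub (hmem b hxb le_rfl)).2.1
  have hξpos : 0 < deriv f ξ := (hsub (hmem ξ hξ.1 hξ.2.le)).1
  rw [hslope] at hξpos
  exact (div_pos_iff_of_pos_right (sub_pos.2 hxb)).1 hξpos |>.not_ge (sub_nonpos.2 hfb)

section Line

variable {E F : Type*} [NormedAddCommGroup E] [NormedSpace ℝ E] [NormedAddCommGroup F]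
  [NormedSpace ℝ F] {x v : E}

theorem tendsto_add_smul_nhds_zero : Tendsto (fun t : ℝ => x + t • v) (𝓝 0) (𝓝 x) :=
  (by fun_prop : Continuous fun t : ℝ => x + t • v).tendsto' 0 x (by simp)

theorem hasDerivAt_comp_add_smul {g : E → F} {t : ℝ} (hg : DifferentiableAt ℝ g (x + t • v)) :
    HasDerivAt (fun s : ℝ => g (x + s • v)) (fderiv ℝ g (x + t • v) v) t :=
  hg.hasFDerivAt.comp_hasDerivAt t (by simpa using ((hasDerivAt_id t).smul_const v).const_add x)

theorem hasDerivAt_fderiv_comp_add_smul {g : E → F} (hg : DifferentiableAt ℝ (fderiv ℝ g) x) :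
    HasDerivAt (fun s : ℝ => fderiv ℝ g (x + s • v) v) (iteratedFDeriv ℝ 2 g x ![v, v]) 0 := by
  have hx : x + (0 : ℝ) • v = x := by rw [zero_smul, add_zero]
  have := (hasDerivAt_comp_add_smul (g := fderiv ℝ g) (v := v) (t := 0) (by rwa [hx])).clm_apply
    (hasDerivAt_const (0 : ℝ) v)
  rw [iteratedFDeriv_two_apply]
  simpa only [hx, map_zero, add_zero, Matrix.cons_val_zero, Matrix.cons_val_one] using this

end Line

section Hessian

variable {E : Type*} [NormedAddCommGroup E] [NormedSpace ℝ E] {x : E}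

theorem IsLocalMax.iteratedFDeriv_two_nonpos {g : E → ℝ} (hmax : IsLocalMax g x)
    (hg : ContDiffAt ℝ 2 g x) (v : E) : iteratedFDeriv ℝ 2 g x ![v, v] ≤ 0 := by
  have hline := tendsto_add_smul_nhds_zero (x := x) (v := v)
  refine IsLocalMax.hasDerivAt_deriv_nonpos (f := fun t : ℝ => g (x + t • v)) ?_ ?_
    (hasDerivAt_fderiv_comp_add_smul ((hg.fderiv_right le_rfl).differentiableAt one_ne_zero))
  · simpa [IsLocalMax, IsMaxFilter] using hline.eventually hmax
  · filter_upwards [hline.eventually (hg.eventually (by simp))] with t ht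
    exact hasDerivAt_comp_add_smul (ht.differentiableAt two_ne_zero)

theorem iteratedFDeriv_two_rpow_const_apply {ψ : E → ℝ} (hψ : ContDiffAt ℝ 2 ψ x) (hx : ψ x ≠ 0)
    (a : ℝ) (v : E) :
    iteratedFDeriv ℝ 2 (fun y => ψ y ^ a) x ![v, v] =
      a * ψ x ^ (a - 1) * (iteratedFDeriv ℝ 2 ψ x ![v, v] + (a - 1) * fderiv ℝ ψ x v ^ 2 / ψ x) := by
  have hline := tendsto_add_smul_nhds_zero (x := x) (v := v)
  have hnear : ∀ᶠ t in 𝓝 (0 : ℝ), ContDiffAt ℝ 2 ψ (x + t • v) ∧ ψ (x + t • v) ≠ 0 :=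
    hline.eventually ((hψ.eventually (by simp)).and (hψ.continuousAt.eventually_ne hx))
  have hfderiv : (fun t : ℝ => fderiv ℝ (fun y => ψ y ^ a) (x + t • v) v) =ᶠ[𝓝 0]
      fun t => a * ψ (x + t • v) ^ (a - 1) * fderiv ℝ ψ (x + t • v) v := by
    filter_upwards [hnear] with t ⟨hd, hne⟩
    rw [((hd.differentiableAt two_ne_zero).hasFDerivAt.rpow_const (Or.inl hne)).fderiv]
    rfl
  have hpow := (hψ.rpow_const_of_ne (p := a) hx).fderiv_right (m := 1) le_rfl
  have hx0 : x + (0 : ℝ) • v = x := by rw [zero_smul, add_zero]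
  have hφ := hasDerivAt_comp_add_smul (g := ψ) (v := v) (t := 0)
    (by rw [hx0]; exact hψ.differentiableAt two_ne_zero)
  rw [hx0] at hφ
  have hprod := ((hφ.rpow_const (p := a - 1) (Or.inl (by simpa [hx0] using hx))).const_mul a).mul
    (hasDerivAt_fderiv_comp_add_smul (v := v) ((hψ.fderiv_right le_rfl).differentiableAt one_ne_zero))
  rw [(hasDerivAt_fderiv_comp_add_smul (hpow.differentiableAt one_ne_zero)).unique
    (hprod.congr_of_eventuallyEq hfderiv)]
  simp only [hx0, rpow_sub_one hx]
  field_simp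
  ring

theorem IsLocalMax.iteratedFDeriv_two_le_of_sub_mul_rpow {u ψ : E → ℝ} {c a : ℝ}
    (hmax : IsLocalMax (fun y => u y - c * ψ y ^ a) x) (hu : ContDiffAt ℝ 2 u x)
    (hψ : ContDiffAt ℝ 2 ψ x) (hx : ψ x ≠ 0) (v : E) :
    iteratedFDeriv ℝ 2 u x ![v, v] ≤ c * (a * ψ x ^ (a - 1)) *
      (iteratedFDeriv ℝ 2 ψ x ![v, v] + (a - 1) * fderiv ℝ ψ x v ^ 2 / ψ x) := by
  have hpow := hψ.rpow_const_of_ne (p := a) hx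
  have hhess := hmax.iteratedFDeriv_two_nonpos (hu.sub (contDiffAt_const.mul hpow)) v
  have hsmul := iteratedFDeriv_const_smul_apply' (i := 2) (a := c) (f := fun y => ψ y ^ a) hpow
  simp only [smul_eq_mul] at hsmul
  rw [fun_iteratedFDeriv_sub_apply (i := 2) hu (contDiffAt_const.mul hpow), hsmul, sub_apply,
    smul_apply, smul_eq_mul, iteratedFDeriv_two_rpow_const_apply hψ hx] at hhess
  linarith

end Hessian

theorem hess_at_max_of_quotient_general
    {E : Type*} [NormedAddCommGroup E] [InnerProductSpace ℝ E]
    (f ψ : E → ℝ) (hf : ContDiff ℝ 2 f) (hψ : ContDiff ℝ 2 ψ)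
    (hψpos : ∀ x, 0 < ψ x) (x₀ : E) (k : ℕ) (xk : E)
    (hmax : ∀ x, (f x - f x₀ + 1) / (ψ x ^ ((1:ℝ)/k)) ≤
      (f xk - f x₀ + 1) / (ψ xk ^ ((1:ℝ)/k))) :
    ∀ X : E,
      iteratedFDeriv ℝ 2 f xk ![X, X] ≤
        ((f xk - f x₀ + 1) / (k * ψ xk)) *
          (iteratedFDeriv ℝ 2 ψ xk ![X, X] +
            ((1 / (k:ℝ)) - 1) * (fderiv ℝ ψ xk X) ^ 2 / ψ xk) ∧
      iteratedFDeriv ℝ 2 f xk ![X, X] ≤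
        ((f xk - f x₀ + 1) / (k * ψ xk)) * iteratedFDeriv ℝ 2 ψ xk ![X, X] := by
  intro X
  set a : ℝ := 1 / k
  set A := f xk - f x₀ + 1
  set c := A / ψ xk ^ a
  have hψa : ∀ x, 0 < ψ x ^ a := fun x => rpow_pos_of_pos (hψpos x) a
  have hcA : c * ψ xk ^ a = A := div_mul_cancel₀ A (hψa xk).ne'
  have hA : 0 < A := hcA ▸ mul_pos ((div_pos one_pos (hψa x₀)).trans_le (by simpa using hmax x₀))
    (hψa xk)
  have hlocalMax : IsLocalMax (fun x => f x - c * ψ x ^ a) xk := Eventually.of_forall fun x => by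
    have := (div_le_iff₀ (hψa x)).1 (hmax x)
    dsimp only
    linarith
  have hcoef : c * (a * ψ xk ^ (a - 1)) = A / (k * ψ xk) := by
    rw [rpow_sub_one (hψpos xk).ne']
    calc c * (a * (ψ xk ^ a / ψ xk)) = a * (c * ψ xk ^ a) / ψ xk := by ring
      _ = A / (k * ψ xk) := by rw [hcA]; simp only [a]; ring
  have hfirst := hlocalMax.iteratedFDeriv_two_le_of_sub_mul_rpow hf.contDiffAt hψ.contDiffAt
    (hψpos xk).ne' X
  rw [hcoef] at hfirst
  have ha : a - 1 ≤ 0 := sub_nonpos.2 (by simpa [a] using Nat.cast_inv_le_one k)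
  refine ⟨hfirst, hfirst.trans (mul_le_mul_of_nonneg_left (add_le_of_nonpos_right ?_)
    (div_nonneg hA.le (mul_nonneg k.cast_nonneg (hψpos xk).le)))⟩
  exact div_nonpos_of_nonpos_of_nonneg (mul_nonpos_of_nonpos_of_nonneg ha (sq_nonneg _))
    (hψpos xk).le

/-- Second-order condition at a positive maximum of `f_k = (f - f x₀ + 1) · ψ^{-1/k}`. -/
theorem hess_at_max_of_quotient
    {E : Type*} [NormedAddCommGroup E] [InnerProductSpace ℝ E] [CompleteSpace E]
    (f ψ : E → ℝ) (hf : ContDiff ℝ 2 f) (hψ : ContDiff ℝ 2 ψ)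
    (hψpos : ∀ x, 0 < ψ x) (x₀ : E) (k : ℕ) (hk : 1 ≤ k) (xk : E)
    (hmax : ∀ x, (f x - f x₀ + 1) / (ψ x ^ ((1:ℝ)/k)) ≤
      (f xk - f x₀ + 1) / (ψ xk ^ ((1:ℝ)/k)))
    (hposmax : 0 < (f xk - f x₀ + 1) / (ψ xk ^ ((1:ℝ)/k))) :
    ∀ X : E,
      iteratedFDeriv ℝ 2 f xk ![X, X] ≤
        ((f xk - f x₀ + 1) / (k * ψ xk)) *
          (iteratedFDeriv ℝ 2 ψ xk ![X, X] +
            ((1 / (k:ℝ)) - 1) * (fderiv ℝ ψ xk X) ^ 2 / ψ xk) ∧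
      iteratedFDeriv ℝ 2 f xk ![X, X] ≤
        ((f xk - f x₀ + 1) / (k * ψ xk)) * iteratedFDeriv ℝ 2 ψ xk ![X, X] :=
  hess_at_max_of_quotient_general f ψ hf hψ hψpos x₀ k xk hmax
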